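/- Under the linear herding model with no misbehaving ratings, suppose α has a unique largest entry, with largest value α_max attained at m* and second largest value α_secmax = max_{m ≠ m*} α_m < α_max. For the majority rule A(x) = argmax_{m∈𝓜} x_m the following holds: for any δ ∈ (0,1), if the number of ratings i satisfies φ_i ≥ (M²(M+1)²/(α_max − α_secmax)²)·ln(2M/δ), then with probability at least 1 − δ the entry β_{i,m*} is strictly larger than β_{i,m} for every m ≠ m* (so A(β_i) = A(α) = m*). -/

import Mathlib

/-!
For each rating level `m`, the error `β_{i,m} - α_m` divided by `ϕ_{i-1}` is a martingale: under
the linear herding model the `j`-th rating moves it by `w̃_j / ϕ_{j-1}` times the deviation of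
`1{R_j = m}` from its conditional mean. Iterating a conditional Hoeffding bound shows that
`β_{i,m} - α_m` is sub-Gaussian with variance proxy `ϕ_{i-1}² ∑_{j ≤ i} w̃_j² / ϕ_{j-1}² = 2 / φ_i`,
so `|β_{i,m} - α_m| ≥ (α_max - α_secmax) / 2` has probability at most
`2 exp(-(α_max - α_secmax)² φ_i / 16)`. A union bound over the `M` levels and the assumption on
`φ_i` bound the total by `δ`, and off this event `β_{i,m*}` beats every other `β_{i,m}`.
-/

open MeasureTheory Filter

/-- Cumulative weight `∑_{j=1}^i w_j`. -/
noncomputable def Sw (w : ℕ → ℝ) (i : ℕ) : ℝ := ∑ j ∈ Finset.Icc 1 i, w j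

/-- Normalized weight `w̃_i = w_i / ∑_{j=1}^i w_j`. -/
noncomputable def wnorm (w : ℕ → ℝ) (i : ℕ) : ℝ := w i / Sw w i

/-- Historical collective opinion
`β_{i,m} = (∑_{j=1}^i w_j 1{R_j = m}) / (∑_{j=1}^i w_j)`. -/
noncomputable def betaH {Ω : Type*} (w : ℕ → ℝ) (R : ℕ → Ω → ℕ) (i m : ℕ) (ω : Ω) : ℝ :=
  (∑ j ∈ Finset.Icc 1 i, w j * (if R j ω = m then (1 : ℝ) else 0)) / Sw w i

/-- `𝓗_i`: the σ-algebra generated by `R_1, …, R_i` (trivial for `i = 0`). -/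
def Hsig {Ω : Type*} (R : ℕ → Ω → ℕ) (i : ℕ) : MeasurableSpace Ω :=
  ⨆ j ∈ Finset.Icc 1 i, MeasurableSpace.comap (R j) ⊤

/-- `ϕ_j = ∏_{ℓ=1}^j [1 − w̃_{ℓ+1} (1 − γ_ℓ + η_ℓ γ_ℓ)]` (with `ϕ_0 = 1`). -/
noncomputable def varphi (wt γ η : ℕ → ℝ) (j : ℕ) : ℝ :=
  ∏ ℓ ∈ Finset.Icc 1 j, (1 - wt (ℓ + 1) * (1 - γ ℓ + η ℓ * γ ℓ))

/-- Convergence-speed metric `φ_i = 1 / ((ϕ_{i−1}²/2) · ∑_{j=1}^i w̃_j²/ϕ_{j−1}²)`. -/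
noncomputable def phiSpeed (wt γ η : ℕ → ℝ) (i : ℕ) : ℝ :=
  1 / ((varphi wt γ η (i - 1)) ^ 2 / 2 *
    ∑ j ∈ Finset.Icc 1 i, (wt j) ^ 2 / (varphi wt γ η (j - 1)) ^ 2)

open ProbabilityTheory Real

section ConditionalHoeffding

variable {Ω : Type*} {m0 : MeasurableSpace Ω} {μ : Measure Ω}

lemma integral_mul_eq_of_condExp_ae_eq [IsFiniteMeasure μ] {F : MeasurableSpace Ω} (hF : F ≤ m0)
    {g X q : Ω → ℝ} (hg : StronglyMeasurable[F] g) (hgX : Integrable (fun ω ↦ g ω * X ω) μ)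
    (hX : Integrable X μ) (hXq : μ[X|F] =ᵐ[μ] q) :
    ∫ ω, g ω * X ω ∂μ = ∫ ω, g ω * q ω ∂μ := by
  have hmul : μ[fun ω ↦ g ω * X ω|F] =ᵐ[μ] fun ω ↦ g ω * q ω := by
    filter_upwards [condExp_mul_of_stronglyMeasurable_left hg hgX hX, hXq] with ω h1 h2
    exact h1.trans (congrArg (g ω * ·) h2)
  rw [← integral_condExp hF]
  exact integral_congr_ae hmul

/-- Conditional Hoeffding lemma: `exp` lies below its chord on `[-|c|, |c|]`, whose linear part
integrates to zero against `g` by the tower property, and `cosh c ≤ exp (c ^ 2 / 2)`. -/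
lemma integral_mul_exp_mul_sub_condExp_le [IsFiniteMeasure μ] {F : MeasurableSpace Ω}
    (hF : F ≤ m0) {g X q : Ω → ℝ} (hgF : StronglyMeasurable[F] g) (hg0 : 0 ≤ g)
    (hg : Integrable g μ) (hX : Measurable[m0] X) (hX01 : ∀ ω, X ω ∈ Set.Icc (0 : ℝ) 1)
    (hq : Measurable[m0] q) (hq01 : ∀ ω, q ω ∈ Set.Icc (0 : ℝ) 1) (hcond : μ[X|F] =ᵐ[μ] q) (c : ℝ) :
    ∫ ω, g ω * exp (c * (X ω - q ω)) ∂μ ≤ exp (c ^ 2 / 2) * ∫ ω, g ω ∂μ := by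
  have hXq : ∀ ω, |X ω - q ω| ≤ 1 := fun ω ↦
    abs_sub_le_iff.2 ⟨by linarith [(hX01 ω).2, (hq01 ω).1], by linarith [(hX01 ω).1, (hq01 ω).2]⟩
  have hgX : Integrable (fun ω ↦ g ω * X ω) μ :=
    hg.mul_bdd hX.aestronglyMeasurable (c := 1) (ae_of_all _ fun ω ↦ by
      rw [Real.norm_eq_abs, abs_le]; constructor <;> linarith [(hX01 ω).1, (hX01 ω).2])
  have hgq : Integrable (fun ω ↦ g ω * q ω) μ :=
    hg.mul_bdd hq.aestronglyMeasurable (c := 1) (ae_of_all _ fun ω ↦ by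
      rw [Real.norm_eq_abs, abs_le]; constructor <;> linarith [(hq01 ω).1, (hq01 ω).2])
  have hgexp : Integrable (fun ω ↦ g ω * exp (c * (X ω - q ω))) μ :=
    hg.mul_bdd ((hX.sub hq).const_mul c).exp.aestronglyMeasurable (c := exp |c|)
      (ae_of_all _ fun ω ↦ by
        rw [Real.norm_eq_abs, abs_exp, exp_le_exp]
        calc c * (X ω - q ω) ≤ |c| * |X ω - q ω| := (le_abs_self _).trans (abs_mul _ _).le
          _ ≤ |c| := mul_le_of_le_one_right (abs_nonneg c) (hXq ω))
  have horth : ∫ ω, g ω * X ω ∂μ = ∫ ω, g ω * q ω ∂μ :=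
    integral_mul_eq_of_condExp_ae_eq hF hgF hgX
      (Integrable.of_mem_Icc 0 1 hX.aemeasurable (ae_of_all _ hX01)) hcond
  have hgXq : Integrable (fun ω ↦ g ω * X ω - g ω * q ω) μ := hgX.sub hgq
  calc ∫ ω, g ω * exp (c * (X ω - q ω)) ∂μ
      ≤ ∫ ω, cosh c * g ω + sinh c * (g ω * X ω - g ω * q ω) ∂μ := by
        refine integral_mono hgexp ((hg.const_mul _).add (hgXq.const_mul _)) fun ω ↦ ?_
        have := mul_le_mul_of_nonneg_left (exp_mul_le_cosh_add_mul_sinh (hXq ω) c) (hg0 ω)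
        rw [mul_comm c]
        linarith
    _ = cosh c * ∫ ω, g ω ∂μ := by
        rw [integral_add (hg.const_mul _) (hgXq.const_mul _), integral_const_mul,
          integral_const_mul, integral_sub hgX hgq, horth, sub_self, mul_zero, add_zero]
    _ ≤ exp (c ^ 2 / 2) * ∫ ω, g ω ∂μ :=
        mul_le_mul_of_nonneg_right (cosh_le_exp_half_sq c) (integral_nonneg hg0)

end ConditionalHoeffding

section Weights

variable {w : ℕ → ℝ}

lemma Sw_one : Sw w 1 = w 1 := by simp [Sw]

lemma Sw_succ (i : ℕ) : Sw w (i + 1) = Sw w i + w (i + 1) :=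
  Finset.sum_Icc_succ_top (by omega) _

lemma Sw_nonneg (hw : ∀ j, 0 ≤ w j) (i : ℕ) : 0 ≤ Sw w i :=
  Finset.sum_nonneg fun j _ ↦ hw j

lemma Sw_pos (hw : ∀ j, 0 ≤ w j) (hw1 : 0 < w 1) {i : ℕ} (hi : 1 ≤ i) : 0 < Sw w i :=
  hw1.trans_le (Finset.single_le_sum (fun j _ ↦ hw j) (Finset.mem_Icc.2 ⟨le_rfl, hi⟩))

lemma wnorm_one (hw1 : 0 < w 1) : wnorm w 1 = 1 := by
  rw [wnorm, Sw_one, div_self hw1.ne']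

lemma wnorm_nonneg (hw : ∀ j, 0 ≤ w j) (i : ℕ) : 0 ≤ wnorm w i :=
  div_nonneg (hw i) (Sw_nonneg hw i)

lemma wnorm_mem_Ico (hw : ∀ j, 0 ≤ w j) (hw1 : 0 < w 1) {i : ℕ} (hi : 2 ≤ i) :
    wnorm w i ∈ Set.Ico (0 : ℝ) 1 := by
  obtain ⟨k, rfl⟩ : ∃ k, i = k + 1 := ⟨i - 1, by omega⟩
  have hS := Sw_pos hw hw1 (by omega : 1 ≤ k)
  refine ⟨wnorm_nonneg hw _, ?_⟩
  rw [wnorm, Sw_succ, div_lt_one (by linarith [hw (k + 1)])]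
  linarith

end Weights

section HistoricalOpinion

variable {Ω : Type*} {w : ℕ → ℝ} {R : ℕ → Ω → ℕ}

lemma betaH_mem_Icc (hw : ∀ j, 0 ≤ w j) (i m : ℕ) (ω : Ω) :
    betaH w R i m ω ∈ Set.Icc (0 : ℝ) 1 := by
  have hind : ∀ j, 0 ≤ w j * (if R j ω = m then (1 : ℝ) else 0) ∧
      w j * (if R j ω = m then (1 : ℝ) else 0) ≤ w j := fun j ↦ by
    split_ifs <;> simp [hw j]
  exact ⟨div_nonneg (Finset.sum_nonneg fun j _ ↦ (hind j).1) (Sw_nonneg hw i),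
    div_le_one_of_le₀ (Finset.sum_le_sum fun j _ ↦ (hind j).2) (Sw_nonneg hw i)⟩

lemma betaH_one (hw1 : w 1 ≠ 0) (m : ℕ) (ω : Ω) :
    betaH w R 1 m ω = if R 1 ω = m then 1 else 0 := by
  rw [betaH, Sw_one, Finset.Icc_self, Finset.sum_singleton, mul_div_cancel_left₀ _ hw1]

lemma betaH_succ {i : ℕ} (hS : Sw w i ≠ 0) (hS' : Sw w (i + 1) ≠ 0) (m : ℕ) (ω : Ω) :
    betaH w R (i + 1) m ω = (1 - wnorm w (i + 1)) * betaH w R i m ω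
      + wnorm w (i + 1) * (if R (i + 1) ω = m then 1 else 0) := by
  rw [Sw_succ] at hS'
  simp only [betaH, wnorm, Sw_succ, Finset.sum_Icc_succ_top (by omega : 1 ≤ i + 1)]
  field_simp
  ring

end HistoricalOpinion

section Varphi

variable {wt γ η : ℕ → ℝ}

lemma varphi_zero : varphi wt γ η 0 = 1 := by simp [varphi]

lemma varphi_succ (k : ℕ) :
    varphi wt γ η (k + 1)
      = varphi wt γ η k * (1 - wt (k + 2) * (1 - γ (k + 1) + η (k + 1) * γ (k + 1))) :=
  Finset.prod_Icc_succ_top (by omega) _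

lemma one_sub_mul_one_sub_add_mul_pos {v g e : ℝ} (hv : v ∈ Set.Ico (0 : ℝ) 1)
    (hg : g ∈ Set.Icc (0 : ℝ) 1) (he : e ∈ Set.Icc (0 : ℝ) 1) :
    0 < 1 - v * (1 - g + e * g) := by
  obtain ⟨hv0, hv1⟩ := hv
  have : v * (1 - g + e * g) ≤ v := by
    nlinarith [mul_nonneg hv0 (mul_nonneg hg.1 (sub_nonneg.2 he.2)), mul_nonneg hg.1 he.1]
  linarith

lemma varphi_pos (hwt : ∀ ℓ, 2 ≤ ℓ → wt ℓ ∈ Set.Ico (0 : ℝ) 1)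
    (hγ : ∀ i, γ i ∈ Set.Icc (0 : ℝ) 1) (hη : ∀ i, η i ∈ Set.Icc (0 : ℝ) 1) (j : ℕ) :
    0 < varphi wt γ η j :=
  Finset.prod_pos fun ℓ hℓ ↦ one_sub_mul_one_sub_add_mul_pos
    (hwt (ℓ + 1) (by simp at hℓ; omega)) (hγ ℓ) (hη ℓ)

lemma phiSpeed_pos (hwt : ∀ ℓ, 2 ≤ ℓ → wt ℓ ∈ Set.Ico (0 : ℝ) 1) (hwt1 : wt 1 ≠ 0)
    (hγ : ∀ i, γ i ∈ Set.Icc (0 : ℝ) 1) (hη : ∀ i, η i ∈ Set.Icc (0 : ℝ) 1)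
    {i : ℕ} (hi : 1 ≤ i) : 0 < phiSpeed wt γ η i := by
  have hφ := varphi_pos hwt hγ hη
  have hV : 0 < ∑ j ∈ Finset.Icc 1 i, wt j ^ 2 / varphi wt γ η (j - 1) ^ 2 :=
    Finset.sum_pos' (fun j _ ↦ by positivity)
      ⟨1, Finset.mem_Icc.2 ⟨le_rfl, hi⟩, by have := hφ 0; positivity⟩
  rw [phiSpeed]
  have := hφ (i - 1)
  positivity

lemma phiSpeed_wnorm_pos {w : ℕ → ℝ} (hw : ∀ j, 0 ≤ w j) (hw1 : 0 < w 1)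
    (hγ : ∀ i, γ i ∈ Set.Icc (0 : ℝ) 1) (hη : ∀ i, η i ∈ Set.Icc (0 : ℝ) 1) {i : ℕ} (hi : 1 ≤ i) :
    0 < phiSpeed (wnorm w) γ η i :=
  phiSpeed_pos (fun _ ↦ wnorm_mem_Ico hw hw1) (by rw [wnorm_one hw1]; exact one_ne_zero) hγ hη hi

end Varphi

section Measurability

variable {Ω : Type*} {R : ℕ → Ω → ℕ}

lemma measurable_ite_eq {F : MeasurableSpace Ω} {j m : ℕ} (h : Measurable[F] (R j)) :
    Measurable[F] fun ω ↦ if R j ω = m then (1 : ℝ) else 0 :=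
  (measurable_from_top (f := fun n : ℕ ↦ if n = m then (1 : ℝ) else 0)).comp h

lemma measurable_betaH {F : MeasurableSpace Ω} {w : ℕ → ℝ} {n : ℕ}
    (h : ∀ j ∈ Finset.Icc 1 n, Measurable[F] (R j)) (m : ℕ) :
    Measurable[F] (betaH w R n m) :=
  (Finset.measurable_sum _ fun j hj ↦ measurable_const.mul (measurable_ite_eq (h j hj))).div_const _

lemma Hsig_le [m0 : MeasurableSpace Ω] (hR : ∀ i, Measurable (R i)) (n : ℕ) : Hsig R n ≤ m0 :=
  iSup₂_le fun j _ ↦ (hR j).comap_le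

lemma measurable_Hsig {n j : ℕ} (hj : j ∈ Finset.Icc 1 n) : Measurable[Hsig R n] (R j) :=
  measurable_iff_comap_le.2 <|
    le_biSup (fun j ↦ MeasurableSpace.comap (R j) (⊤ : MeasurableSpace ℕ)) hj

end Measurability

lemma herding_error_div_succ {β x a g e v ϕ : ℝ} (hu : 1 - v * (1 - g + e * g) ≠ 0) :
    ((1 - v) * β + v * x - a) / (ϕ * (1 - v * (1 - g + e * g)))
      = (β - a) / ϕ + v / (ϕ * (1 - v * (1 - g + e * g)))
          * (x - (g * ((1 - e) * β + e * a) + (1 - g) * a)) := by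
  have key : (1 - v) * β + v * x - a = (1 - v * (1 - g + e * g)) * (β - a)
      + v * (x - (g * ((1 - e) * β + e * a) + (1 - g) * a)) := by
    ring
  rw [key, add_div, mul_comm ϕ, mul_div_mul_left _ _ hu, mul_comm (1 - v * (1 - g + e * g)),
    mul_div_assoc]
  ring

lemma herding_prediction_mem_Icc {g e b a : ℝ} (hg : g ∈ Set.Icc (0 : ℝ) 1)
    (he : e ∈ Set.Icc (0 : ℝ) 1) (hb : b ∈ Set.Icc (0 : ℝ) 1) (ha : a ∈ Set.Icc (0 : ℝ) 1) :
    g * ((1 - e) * b + e * a) + (1 - g) * a ∈ Set.Icc (0 : ℝ) 1 := by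
  obtain ⟨hg0, hg1⟩ := hg
  obtain ⟨he0, he1⟩ := he
  obtain ⟨hb0, hb1⟩ := hb
  obtain ⟨ha0, ha1⟩ := ha
  constructor <;> nlinarith [mul_nonneg hg0 (sub_nonneg.2 he1), mul_nonneg hg0 he0]

lemma betaH_sub_div_varphi_succ {Ω : Type*} {R : ℕ → Ω → ℕ} {w γ η : ℕ → ℝ}
    (hw : ∀ j, 0 ≤ w j) (hw1 : 0 < w 1) (hγ : ∀ i, γ i ∈ Set.Icc (0 : ℝ) 1)
    (hη : ∀ i, η i ∈ Set.Icc (0 : ℝ) 1) (k m : ℕ) (a : ℝ) (ω : Ω) :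
    (betaH w R (k + 2) m ω - a) / varphi (wnorm w) γ η (k + 1)
      = (betaH w R (k + 1) m ω - a) / varphi (wnorm w) γ η k
        + wnorm w (k + 2) / varphi (wnorm w) γ η (k + 1)
          * ((if R (k + 2) ω = m then 1 else 0) - (γ (k + 1) * ((1 - η (k + 1))
              * betaH w R (k + 1) m ω + η (k + 1) * a) + (1 - γ (k + 1)) * a)) := by
  rw [betaH_succ (Sw_pos hw hw1 (by omega)).ne' (Sw_pos hw hw1 (by omega)).ne', varphi_succ]
  exact herding_error_div_succ (one_sub_mul_one_sub_add_mul_pos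
    (wnorm_mem_Ico hw hw1 (by omega : 2 ≤ k + 2)) (hγ (k + 1)) (hη (k + 1))).ne'

section HerdingModel

variable {Ω : Type*} {m0 : MeasurableSpace Ω} {μ : Measure Ω} {R : ℕ → Ω → ℕ} {w γ η : ℕ → ℝ}
  {m : ℕ} {a : ℝ}

/-- The linear herding model, seen from the single rating level `m`, with `a = α_m`. -/
structure IsLinearHerding (μ : Measure Ω) (R : ℕ → Ω → ℕ) (w γ η : ℕ → ℝ) (m : ℕ) (a : ℝ) :
    Prop where
  measure_first : μ {ω | R 1 ω = m} = ENNReal.ofReal a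
  condExp_succ : ∀ i : ℕ, 1 ≤ i →
    μ[(fun ω => if R (i + 1) ω = m then (1 : ℝ) else 0) | Hsig R i]
      =ᵐ[μ] fun ω => γ i * ((1 - η i) * betaH w R i m ω + η i * a) + (1 - γ i) * a

lemma IsLinearHerding.integral_ite_first (hmodel : IsLinearHerding μ R w γ η m a)
    (hR : Measurable (R 1)) (ha : 0 ≤ a) :
    ∫ ω, (if R 1 ω = m then (1 : ℝ) else 0) ∂μ = a := by
  have hind : (fun ω ↦ if R 1 ω = m then (1 : ℝ) else 0) = {ω | R 1 ω = m}.indicator 1 := by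
    ext ω
    simp [Set.indicator_apply]
  have hs : MeasurableSet {ω | R 1 ω = m} := hR (measurableSet_singleton m)
  rw [hind, integral_indicator_one hs, measureReal_def, hmodel.measure_first,
    ENNReal.toReal_ofReal ha]

lemma abs_betaH_sub_le_one (hw : ∀ j, 0 ≤ w j) (ha : a ∈ Set.Icc (0 : ℝ) 1) (i : ℕ) (ω : Ω) :
    |betaH w R i m ω - a| ≤ 1 := by
  obtain ⟨hb0, hb1⟩ := betaH_mem_Icc (R := R) hw i m ω
  exact abs_sub_le_iff.2 ⟨by linarith [ha.1], by linarith [ha.2]⟩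

lemma integrable_exp_mul_betaH_sub [IsFiniteMeasure μ] (hRmeas : ∀ i, Measurable (R i))
    (hw : ∀ j, 0 ≤ w j) (ha : a ∈ Set.Icc (0 : ℝ) 1) (i : ℕ) (t : ℝ) :
    Integrable (fun ω ↦ exp (t * (betaH w R i m ω - a))) μ :=
  integrable_exp_mul_of_mem_Icc (a := -1) (b := 1)
    ((measurable_betaH (fun j _ ↦ hRmeas j) m).sub_const a).aemeasurable
    (ae_of_all _ fun ω ↦ abs_le.1 (abs_betaH_sub_le_one hw ha i ω))

lemma integral_exp_mul_betaH_sub_div_varphi_le [IsProbabilityMeasure μ]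
    (hRmeas : ∀ i, Measurable (R i)) (hw : ∀ j, 0 ≤ w j) (hw1 : 0 < w 1)
    (hγ : ∀ i, γ i ∈ Set.Icc (0 : ℝ) 1) (hη : ∀ i, η i ∈ Set.Icc (0 : ℝ) 1)
    (ha : a ∈ Set.Icc (0 : ℝ) 1) (hmodel : IsLinearHerding μ R w γ η m a)
    (k : ℕ) (c : ℝ) :
    ∫ ω, exp (c * ((betaH w R (k + 1) m ω - a) / varphi (wnorm w) γ η k)) ∂μ
      ≤ exp (c ^ 2 / 2 *
          ∑ j ∈ Finset.Icc 1 (k + 1), wnorm w j ^ 2 / varphi (wnorm w) γ η (j - 1) ^ 2) := by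
  have hX01 : ∀ j ω, (if R j ω = m then (1 : ℝ) else 0) ∈ Set.Icc (0 : ℝ) 1 := fun j ω ↦ by
    split_ifs <;> simp
  induction k generalizing c with
  | zero =>
    -- the first rating is a conditional step from the trivial σ-algebra
    have := integral_mul_exp_mul_sub_condExp_le (μ := μ) bot_le
      (g := fun _ ↦ 1) (q := fun _ ↦ a) stronglyMeasurable_const (fun _ ↦ zero_le_one)
      (integrable_const 1) (measurable_ite_eq (hRmeas 1)) (hX01 1) measurable_const
      (fun _ ↦ ha) (by rw [condExp_bot, hmodel.integral_ite_first (hRmeas 1) ha.1]) c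
    simpa [betaH_one hw1.ne', varphi_zero, wnorm_one hw1] using this
  | succ k ih =>
    set φ := varphi (wnorm w) γ η
    set β := betaH w R (k + 1) m
    set X := fun ω ↦ if R (k + 2) ω = m then (1 : ℝ) else 0
    set q := fun ω ↦ γ (k + 1) * ((1 - η (k + 1)) * β ω + η (k + 1) * a) + (1 - γ (k + 1)) * a
    set g := fun ω ↦ exp (c * ((β ω - a) / φ k))
    have hq01 : ∀ ω, q ω ∈ Set.Icc (0 : ℝ) 1 := fun ω ↦
      herding_prediction_mem_Icc (hγ (k + 1)) (hη (k + 1)) (betaH_mem_Icc hw (k + 1) m ω) ha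
    have hgF : StronglyMeasurable[Hsig R (k + 1)] g :=
      (((measurable_betaH (fun j hj ↦ measurable_Hsig hj) m).sub_const a).div_const _
        |>.const_mul c).exp.stronglyMeasurable
    have hg : Integrable g μ :=
      (integrable_exp_mul_betaH_sub (m := m) hRmeas hw ha (k + 1) (c / φ k)).congr
        (ae_of_all _ fun ω ↦ by simp only [g, β]; rw [div_mul_eq_mul_div, mul_div_assoc])
    have hq : Measurable q := by
      have hβ : Measurable β := measurable_betaH (fun j _ ↦ hRmeas j) m
      fun_prop
    calc ∫ ω, exp (c * ((betaH w R (k + 2) m ω - a) / φ (k + 1))) ∂μ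
        = ∫ ω, g ω * exp (c * (wnorm w (k + 2) / φ (k + 1)) * (X ω - q ω)) ∂μ := by
          refine integral_congr_ae (ae_of_all _ fun ω ↦ ?_)
          simp only [g]
          rw [betaH_sub_div_varphi_succ hw hw1 hγ hη, mul_add, exp_add, mul_assoc]
      _ ≤ exp ((c * (wnorm w (k + 2) / φ (k + 1))) ^ 2 / 2) * ∫ ω, g ω ∂μ :=
          integral_mul_exp_mul_sub_condExp_le (Hsig_le hRmeas (k + 1)) hgF
            (fun _ ↦ (exp_pos _).le) hg (measurable_ite_eq (hRmeas _)) (hX01 _) hq hq01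
            (hmodel.condExp_succ (k + 1) (by omega)) _
      _ ≤ exp ((c * (wnorm w (k + 2) / φ (k + 1))) ^ 2 / 2) *
            exp (c ^ 2 / 2 * ∑ j ∈ Finset.Icc 1 (k + 1), wnorm w j ^ 2 / φ (j - 1) ^ 2) := by
          gcongr
          exact ih c
      _ = exp (c ^ 2 / 2 * ∑ j ∈ Finset.Icc 1 (k + 2), wnorm w j ^ 2 / φ (j - 1) ^ 2) := by
          rw [← exp_add, Finset.sum_Icc_succ_top (by omega : 1 ≤ k + 2),
            show k + 2 - 1 = k + 1 from rfl]
          ring_nf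

lemma hasSubgaussianMGF_betaH_sub [IsProbabilityMeasure μ]
    (hRmeas : ∀ i, Measurable (R i)) (hw : ∀ j, 0 ≤ w j) (hw1 : 0 < w 1)
    (hγ : ∀ i, γ i ∈ Set.Icc (0 : ℝ) 1) (hη : ∀ i, η i ∈ Set.Icc (0 : ℝ) 1)
    (ha : a ∈ Set.Icc (0 : ℝ) 1) (hmodel : IsLinearHerding μ R w γ η m a)
    {i : ℕ} (hi : 1 ≤ i) :
    HasSubgaussianMGF (fun ω ↦ betaH w R i m ω - a)
      (2 / phiSpeed (wnorm w) γ η i).toNNReal μ where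
  integrable_exp_mul := integrable_exp_mul_betaH_sub hRmeas hw ha i
  mgf_le t := by
    obtain ⟨k, rfl⟩ : ∃ k, i = k + 1 := ⟨i - 1, by omega⟩
    have hφ := varphi_pos (fun _ ↦ wnorm_mem_Ico hw hw1) hγ hη k
    have hV : (0 : ℝ) ≤ 2 / phiSpeed (wnorm w) γ η (k + 1) :=
      div_nonneg zero_le_two (phiSpeed_wnorm_pos hw hw1 hγ hη hi).le
    calc mgf (fun ω ↦ betaH w R (k + 1) m ω - a) μ t
        = ∫ ω, exp (t * varphi (wnorm w) γ η k *
            ((betaH w R (k + 1) m ω - a) / varphi (wnorm w) γ η k)) ∂μ := by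
          rw [mgf]
          congr with ω
          field_simp
      _ ≤ _ := integral_exp_mul_betaH_sub_div_varphi_le hRmeas hw hw1 hγ hη ha hmodel k _
      _ = _ := by
          rw [Real.coe_toNNReal _ hV, phiSpeed, Nat.add_sub_cancel]
          field_simp

lemma measureReal_le_abs_betaH_sub_le [IsProbabilityMeasure μ]
    (hRmeas : ∀ i, Measurable (R i)) (hw : ∀ j, 0 ≤ w j) (hw1 : 0 < w 1)
    (hγ : ∀ i, γ i ∈ Set.Icc (0 : ℝ) 1) (hη : ∀ i, η i ∈ Set.Icc (0 : ℝ) 1)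
    (ha : a ∈ Set.Icc (0 : ℝ) 1) (hmodel : IsLinearHerding μ R w γ η m a)
    {i : ℕ} (hi : 1 ≤ i) {ε : ℝ} (hε : 0 ≤ ε) :
    μ.real {ω | ε ≤ |betaH w R i m ω - a|}
      ≤ 2 * exp (-(ε ^ 2 * phiSpeed (wnorm w) γ η i / 4)) := by
  have h := hasSubgaussianMGF_betaH_sub hRmeas hw hw1 hγ hη ha hmodel hi
  have hφ := phiSpeed_wnorm_pos hw hw1 hγ hη hi
  have hexp : exp (-ε ^ 2 / (2 * (2 / phiSpeed (wnorm w) γ η i).toNNReal))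
      = exp (-(ε ^ 2 * phiSpeed (wnorm w) γ η i / 4)) := by
    rw [Real.coe_toNNReal _ (by positivity)]
    congr 1
    field_simp
    ring
  calc μ.real {ω | ε ≤ |betaH w R i m ω - a|}
      ≤ μ.real ({ω | ε ≤ betaH w R i m ω - a} ∪ {ω | ε ≤ -(betaH w R i m ω - a)}) :=
        measureReal_mono fun ω (hω : ε ≤ |_|) ↦ le_abs.1 hω
    _ ≤ exp (-(ε ^ 2 * phiSpeed (wnorm w) γ η i / 4))
          + exp (-(ε ^ 2 * phiSpeed (wnorm w) γ η i / 4)) := by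
        refine (measureReal_union_le _ _).trans (add_le_add ?_ ?_) <;> rw [← hexp]
        · exact h.measure_ge_le hε
        · exact h.neg.measure_ge_le hε
    _ = 2 * exp (-(ε ^ 2 * phiSpeed (wnorm w) γ η i / 4)) := by ring

lemma measureReal_biUnion_le_abs_betaH_sub_le [IsProbabilityMeasure μ] {M : ℕ} {α : ℕ → ℝ}
    (hRmeas : ∀ i, Measurable (R i)) (hw : ∀ j, 0 ≤ w j) (hw1 : 0 < w 1)
    (hγ : ∀ i, γ i ∈ Set.Icc (0 : ℝ) 1) (hη : ∀ i, η i ∈ Set.Icc (0 : ℝ) 1)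
    (hα : ∀ m ∈ Finset.Icc 1 M, α m ∈ Set.Icc (0 : ℝ) 1)
    (hmodel : ∀ m ∈ Finset.Icc 1 M, IsLinearHerding μ R w γ η m (α m))
    {i : ℕ} (hi : 1 ≤ i) {ε : ℝ} (hε : 0 ≤ ε) :
    μ.real (⋃ m ∈ Finset.Icc 1 M, {ω | ε ≤ |betaH w R i m ω - α m|})
      ≤ M * (2 * exp (-(ε ^ 2 * phiSpeed (wnorm w) γ η i / 4))) := calc
  _ ≤ ∑ m ∈ Finset.Icc 1 M, μ.real {ω | ε ≤ |betaH w R i m ω - α m|} :=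
      measureReal_biUnion_finset_le _ _
  _ ≤ ∑ m ∈ Finset.Icc 1 M, 2 * exp (-(ε ^ 2 * phiSpeed (wnorm w) γ η i / 4)) :=
      Finset.sum_le_sum fun m hm ↦ measureReal_le_abs_betaH_sub_le hRmeas hw hw1 hγ hη
        (hα m hm) (hmodel m hm) hi hε
  _ = _ := by rw [Finset.sum_const, Nat.card_Icc, Nat.add_sub_cancel, nsmul_eq_mul]

end HerdingModel

lemma natCast_mul_two_mul_exp_le {M : ℕ} (hM : 2 ≤ M) {G φ δ : ℝ} (hG : 0 < G) (hφ : 0 < φ)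
    (hδ : 0 < δ) (h : (M : ℝ) ^ 2 * ((M : ℝ) + 1) ^ 2 / G ^ 2 * log (2 * M / δ) ≤ φ) :
    M * (2 * exp (-((G / 2) ^ 2 * φ / 4))) ≤ δ := by
  have hM' : (2 : ℝ) ≤ M := by exact_mod_cast hM
  have hL : log (2 * M / δ) ≤ G ^ 2 * φ / 16 := by
    rcases le_or_gt (log (2 * M / δ)) 0 with hL | hL
    · linarith [show 0 < G ^ 2 * φ / 16 by positivity]
    · have h16 : (16 : ℝ) ≤ (M : ℝ) ^ 2 * ((M : ℝ) + 1) ^ 2 := by nlinarith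
      rw [div_mul_eq_mul_div, div_le_iff₀ (by positivity)] at h
      nlinarith
  calc M * (2 * exp (-((G / 2) ^ 2 * φ / 4)))
      ≤ M * (2 * exp (-log (2 * M / δ))) := by gcongr; linarith
    _ = δ := by
        rw [exp_neg, exp_log (by positivity)]
        field_simp

theorem stmt_9_general
    {Ω : Type*} [MeasurableSpace Ω] (μ : Measure Ω) [IsProbabilityMeasure μ]
    (M : ℕ)
    (α : ℕ → ℝ) (hα : ∀ m ∈ Finset.Icc 1 M, α m ∈ Set.Icc (0 : ℝ) 1)
    (R : ℕ → Ω → ℕ)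
    (hRmeas : ∀ i, Measurable (R i))
    (w : ℕ → ℝ) (hw : ∀ j, 0 ≤ w j) (hw1 : 0 < w 1)
    (γ : ℕ → ℝ) (hγ : ∀ i, γ i ∈ Set.Icc (0 : ℝ) 1)
    (η : ℕ → ℝ) (hη : ∀ i, η i ∈ Set.Icc (0 : ℝ) 1)
    -- `P[R_1 = m] = α_m`
    (hR1 : ∀ m ∈ Finset.Icc 1 M, μ {ω | R 1 ω = m} = ENNReal.ofReal (α m))
    -- linear herding model
    (hmodel : ∀ i : ℕ, 1 ≤ i → ∀ m ∈ Finset.Icc 1 M,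
      μ[(fun ω => if R (i + 1) ω = m then (1 : ℝ) else 0) | Hsig R i]
        =ᵐ[μ] fun ω =>
          γ i * ((1 - η i) * betaH w R i m ω + η i * α m) + (1 - γ i) * α m)
    -- unique largest entry `m*` with second largest value `αsec`
    (mstar : ℕ) (hmstar : mstar ∈ Finset.Icc 1 M)
    (αsec : ℝ)
    (hsec_ub : ∀ m ∈ Finset.Icc 1 M, m ≠ mstar → α m ≤ αsec)
    (hsec_mem : ∃ m ∈ Finset.Icc 1 M, m ≠ mstar ∧ α m = αsec)
    (hgap : αsec < α mstar)
    (δ : ℝ) (hδ0 : 0 < δ)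
    (i : ℕ) (hi : 1 ≤ i)
    (hphi : ((M : ℝ) ^ 2 * ((M : ℝ) + 1) ^ 2 / (α mstar - αsec) ^ 2)
        * Real.log (2 * M / δ) ≤ phiSpeed (wnorm w) γ η i) :
    ENNReal.ofReal (1 - δ) ≤
      μ {ω | ∀ m ∈ Finset.Icc 1 M, m ≠ mstar →
        betaH w R i m ω < betaH w R i mstar ω} := by
  obtain ⟨m₂, hm₂, hm₂ne, -⟩ := hsec_mem
  have hM : 2 ≤ M := by simp only [Finset.mem_Icc] at hm₂ hmstar; omega
  set Bad := ⋃ m ∈ Finset.Icc 1 M, {ω | (α mstar - αsec) / 2 ≤ |betaH w R i m ω - α m|}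
  have hBad : MeasurableSet Bad := Finset.measurableSet_biUnion _ fun m _ ↦
    measurableSet_le measurable_const
      ((measurable_betaH (fun j _ ↦ hRmeas j) m).sub_const _).abs
  have hμBad : μ.real Bad ≤ δ :=
    (measureReal_biUnion_le_abs_betaH_sub_le hRmeas hw hw1 hγ hη hα
      (fun m hm ↦ ⟨hR1 m hm, fun i hi ↦ hmodel i hi m hm⟩) hi (by linarith)).trans
      (natCast_mul_two_mul_exp_le hM (sub_pos.2 hgap) (phiSpeed_wnorm_pos hw hw1 hγ hη hi)
        hδ0 hphi)
  have hGood : Badᶜ ⊆ {ω | ∀ m ∈ Finset.Icc 1 M, m ≠ mstar →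
      betaH w R i m ω < betaH w R i mstar ω} := fun ω hω m hm hne ↦ by
    simp only [Bad, Set.mem_compl_iff, Set.mem_iUnion, Set.mem_ofPred_eq, not_exists,
      not_le] at hω
    have h₁ := abs_lt.1 (hω m hm)
    have h₂ := abs_lt.1 (hω mstar hmstar)
    linarith [hsec_ub m hm hne]
  calc ENNReal.ofReal (1 - δ) ≤ ENNReal.ofReal (μ.real Badᶜ) := by
        rw [probReal_compl_eq_one_sub hBad]
        exact ENNReal.ofReal_le_ofReal (by linarith)
    _ = μ Badᶜ := ofReal_measureReal
    _ ≤ _ := measure_mono hGood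

/-- Under the linear herding model with no misbehaving ratings, if `α`
has a unique largest entry `α_max = α m*` with second largest value `α_secmax`, and
`φ_i ≥ (M²(M+1)²/(α_max − α_secmax)²) ln(2M/δ)`, then with probability at least
`1 − δ` the entry `β_{i,m*}` is strictly the largest, so the majority rule applied
to `β_i` returns `m* = argmax_m α_m`. -/
theorem stmt_9
    {Ω : Type*} [MeasurableSpace Ω] (μ : Measure Ω) [IsProbabilityMeasure μ]
    (M : ℕ) (hM : 1 ≤ M)
    (α : ℕ → ℝ) (hα : ∀ m ∈ Finset.Icc 1 M, α m ∈ Set.Icc (0 : ℝ) 1)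
    (hα1 : ∑ m ∈ Finset.Icc 1 M, α m = 1)
    (R : ℕ → Ω → ℕ) (hRrange : ∀ i, 1 ≤ i → ∀ ω, R i ω ∈ Finset.Icc 1 M)
    (hRmeas : ∀ i, Measurable (R i))
    (w : ℕ → ℝ) (hw : ∀ j, 0 ≤ w j) (hw1 : 0 < w 1)
    (γ : ℕ → ℝ) (hγ : ∀ i, γ i ∈ Set.Icc (0 : ℝ) 1)
    (hγsup : ∃ g, g < 1 ∧ ∀ i, γ i ≤ g)
    (η : ℕ → ℝ) (hη : ∀ i, η i ∈ Set.Icc (0 : ℝ) 1)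
    -- `P[R_1 = m] = α_m`
    (hR1 : ∀ m ∈ Finset.Icc 1 M, μ {ω | R 1 ω = m} = ENNReal.ofReal (α m))
    -- linear herding model
    (hmodel : ∀ i : ℕ, 1 ≤ i → ∀ m ∈ Finset.Icc 1 M,
      μ[(fun ω => if R (i + 1) ω = m then (1 : ℝ) else 0) | Hsig R i]
        =ᵐ[μ] fun ω =>
          γ i * ((1 - η i) * betaH w R i m ω + η i * α m) + (1 - γ i) * α m)
    -- Condition (2): `∑ w̃_i = ∞` and `∑ w̃_i² < ∞`
    (hdiv : Tendsto (fun n => ∑ i ∈ Finset.Icc 1 n, wnorm w i) atTop atTop)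
    (hsq : Summable fun i : ℕ => (wnorm w (i + 1)) ^ 2)
    -- unique largest entry `m*` with second largest value `αsec`
    (mstar : ℕ) (hmstar : mstar ∈ Finset.Icc 1 M)
    (αsec : ℝ)
    (hsec_ub : ∀ m ∈ Finset.Icc 1 M, m ≠ mstar → α m ≤ αsec)
    (hsec_mem : ∃ m ∈ Finset.Icc 1 M, m ≠ mstar ∧ α m = αsec)
    (hgap : αsec < α mstar)
    (δ : ℝ) (hδ0 : 0 < δ) (hδ1 : δ < 1)
    (i : ℕ) (hi : 1 ≤ i)
    (hphi : ((M : ℝ) ^ 2 * ((M : ℝ) + 1) ^ 2 / (α mstar - αsec) ^ 2)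
        * Real.log (2 * M / δ) ≤ phiSpeed (wnorm w) γ η i) :
    ENNReal.ofReal (1 - δ) ≤
      μ {ω | ∀ m ∈ Finset.Icc 1 M, m ≠ mstar →
        betaH w R i m ω < betaH w R i mstar ω} :=
  stmt_9_general μ M α hα R hRmeas w hw hw1 γ hγ η hη hR1 hmodel mstar hmstar αsec hsec_ub hsec_mem
    hgap δ hδ0 i hi hphi
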